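/- Let X be a compact convex subset of ℝ^d with nonempty interior, fix β > 0, and let (x_k) be the boundary-phobic greedy sequence: X_0 = ∅ and x_{k+1} ∈ argmax_{x∈X} D_β(x, X_k), where D_β(x, Z) = min{d(x,Z), β·d(x,∂X)} (with the convention d(x,∅) = +∞, so x_1 maximizes d(x,∂X)). Then for all n ≥ 1, P_β(X_{n+1}) = (1/2) · S_β(X_n), where S_β(Z) = sup_{x∈X} D_β(x,Z) and P_β(Z) = min over distinct pairs z_i ≠ z_j in Z of (1/2) min{‖z_i − z_j‖, β·d(z_i,∂X)}. -/

import Mathlib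

open Metric
open scoped Classical

/-- The boundary-phobic compromise distance
`D_β(x,Z) = min{d(x,Z), β d(x,∂X)}`, with the convention `d(x,∅) = +∞`
(so that `D_β(x,∅) = β d(x,∂X)`). -/
noncomputable def Dbeta {d : ℕ} (X : Set (EuclideanSpace ℝ (Fin d))) (β : ℝ)
    (Z : Set (EuclideanSpace ℝ (Fin d))) (y : EuclideanSpace ℝ (Fin d)) : ℝ :=
  if Z.Nonempty then min (infDist y Z) (β * infDist y (frontier X))
  else β * infDist y (frontier X)

/-- The `β`-spacing `S_β(Z) = sup_{x∈X} D_β(x,Z)`. -/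
noncomputable def Sbeta {d : ℕ} (X : Set (EuclideanSpace ℝ (Fin d))) (β : ℝ)
    (Z : Set (EuclideanSpace ℝ (Fin d))) : ℝ :=
  sSup ((Dbeta X β Z) '' X)

/-- The `β`-packing `P_β(Z) = min_{z ≠ z' ∈ Z} (1/2) min{‖z − z'‖, β d(z,∂X)}`. -/
noncomputable def Pbeta {d : ℕ} (X : Set (EuclideanSpace ℝ (Fin d))) (β : ℝ)
    (Z : Set (EuclideanSpace ℝ (Fin d))) : ℝ :=
  sInf {v : ℝ | ∃ p ∈ Z, ∃ q ∈ Z, p ≠ q ∧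
    v = (1 / 2) * min (dist p q) (β * infDist p (frontier X))}

/-!
Write `δ_k = D_β(x_k, X_k)`. Since `D_β(·, Z)` decreases as `Z` grows and `x_k` maximises
`D_β(·, X_k)`, the values `δ_k` are nonincreasing. Hence any two points of `X_{n+1}` are at
distance at least `δ_n`, and each lies at distance at least `δ_n / β` from `∂X`, so that
`P_β(X_{n+1}) ≥ δ_n / 2 = S_β(X_n) / 2`; the pair formed by `x_n` and its nearest neighbour in
`X_n` attains this bound. That pair is genuine because `δ_n > 0`: some interior point of `X`
avoids the finite set `X_n` and lies off `∂X`.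
-/

section Dbeta

variable {d : ℕ} {X Z Z' : Set (EuclideanSpace ℝ (Fin d))} {β : ℝ}
  {y : EuclideanSpace ℝ (Fin d)}

lemma Dbeta_of_nonempty (hZ : Z.Nonempty) :
    Dbeta X β Z y = min (infDist y Z) (β * infDist y (frontier X)) :=
  if_pos hZ

lemma Dbeta_le_infDist (hZ : Z.Nonempty) : Dbeta X β Z y ≤ infDist y Z :=
  (Dbeta_of_nonempty hZ).trans_le (min_le_left _ _)

lemma Dbeta_le_mul_infDist_frontier : Dbeta X β Z y ≤ β * infDist y (frontier X) := by
  unfold Dbeta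
  split
  · exact min_le_right _ _
  · exact le_rfl

lemma Dbeta_anti (h : Z ⊆ Z') : Dbeta X β Z' y ≤ Dbeta X β Z y := by
  by_cases hZ : Z.Nonempty
  · rw [Dbeta_of_nonempty hZ, Dbeta_of_nonempty (hZ.mono h)]
    exact min_le_min_right _ (infDist_le_infDist_of_subset h hZ)
  · exact Dbeta_le_mul_infDist_frontier.trans_eq (if_neg hZ).symm

lemma Dbeta_eq_zero_of_mem (hβ : 0 ≤ β) (hy : y ∈ Z) : Dbeta X β Z y = 0 := by
  rw [Dbeta_of_nonempty ⟨y, hy⟩, infDist_zero_of_mem hy]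
  exact min_eq_left (mul_nonneg hβ infDist_nonneg)

lemma Dbeta_pos (hβ : 0 < β) (hZ : IsClosed Z) (hyZ : y ∉ Z) (hyX : y ∈ interior X)
    (hfr : (frontier X).Nonempty) : 0 < Dbeta X β Z y := by
  have hfrontier : 0 < β * infDist y (frontier X) :=
    mul_pos hβ <| (isClosed_frontier.notMem_iff_infDist_pos hfr).mp fun h => h.2 hyX
  by_cases hne : Z.Nonempty
  · rw [Dbeta_of_nonempty hne]
    exact lt_min ((hZ.notMem_iff_infDist_pos hne).mp hyZ) hfrontier
  · rwa [Dbeta, if_neg hne]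

lemma Sbeta_eq_of_forall_le {z : EuclideanSpace ℝ (Fin d)} (hz : z ∈ X)
    (hmax : ∀ y ∈ X, Dbeta X β Z y ≤ Dbeta X β Z z) : Sbeta X β Z = Dbeta X β Z z :=
  IsGreatest.csSup_eq ⟨⟨z, hz, rfl⟩, by rintro _ ⟨y, hy, rfl⟩; exact hmax y hy⟩

end Dbeta

section Pbeta

variable {d : ℕ} {X Z : Set (EuclideanSpace ℝ (Fin d))} {β : ℝ}

lemma Pbeta_of_subsingleton (hZ : Z.Subsingleton) : Pbeta X β Z = 0 := by
  have hpairs : {v : ℝ | ∃ p ∈ Z, ∃ q ∈ Z, p ≠ q ∧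
      v = 1 / 2 * min (dist p q) (β * infDist p (frontier X))} = ∅ :=
    Set.eq_empty_of_forall_notMem fun _ ⟨_, hp, _, hq, hpq, _⟩ => hpq (hZ hp hq)
  rw [Pbeta, hpairs, Real.sInf_empty]

lemma Pbeta_eq_of_forall_le {v : ℝ} {p q : EuclideanSpace ℝ (Fin d)} (hp : p ∈ Z)
    (hq : q ∈ Z) (hpq : p ≠ q) (hv : v = 1 / 2 * min (dist p q) (β * infDist p (frontier X)))
    (hle : ∀ p ∈ Z, ∀ q ∈ Z, p ≠ q →
      v ≤ 1 / 2 * min (dist p q) (β * infDist p (frontier X))) :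
    Pbeta X β Z = v :=
  IsLeast.csInf_eq ⟨⟨p, hp, q, hq, hpq, hv⟩,
    by rintro _ ⟨p, hp, q, hq, hpq, rfl⟩; exact hle p hp q hq hpq⟩

end Pbeta

section Greedy

variable {d : ℕ} {X : Set (EuclideanSpace ℝ (Fin d))} {β : ℝ}
  {x : ℕ → EuclideanSpace ℝ (Fin d)}

def IsBoundaryPhobicGreedy (X : Set (EuclideanSpace ℝ (Fin d))) (β : ℝ)
    (x : ℕ → EuclideanSpace ℝ (Fin d)) : Prop :=
  ∀ k : ℕ, x k ∈ X ∧
    ∀ y ∈ X, Dbeta X β (x '' Set.Iio k) y ≤ Dbeta X β (x '' Set.Iio k) (x k)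

lemma IsBoundaryPhobicGreedy.Dbeta_antitone
    (hgreedy : IsBoundaryPhobicGreedy X β x)
    {k m : ℕ} (hkm : k ≤ m) :
    Dbeta X β (x '' Set.Iio m) (x m) ≤ Dbeta X β (x '' Set.Iio k) (x k) :=
  (Dbeta_anti (Set.image_mono (Set.Iio_subset_Iio hkm))).trans
    ((hgreedy k).2 _ (hgreedy m).1)

lemma IsBoundaryPhobicGreedy.Dbeta_le_dist
    (hgreedy : IsBoundaryPhobicGreedy X β x)
    {l m n : ℕ} (hlm : l < m) (hmn : m ≤ n) :
    Dbeta X β (x '' Set.Iio n) (x n) ≤ dist (x m) (x l) :=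
  calc Dbeta X β (x '' Set.Iio n) (x n)
      ≤ Dbeta X β (x '' Set.Iio m) (x m) := hgreedy.Dbeta_antitone hmn
    _ ≤ infDist (x m) (x '' Set.Iio m) := Dbeta_le_infDist ⟨x l, l, hlm, rfl⟩
    _ ≤ dist (x m) (x l) := infDist_le_dist_of_mem ⟨l, hlm, rfl⟩

lemma IsBoundaryPhobicGreedy.Pbeta_eq_half_Dbeta
    (hgreedy : IsBoundaryPhobicGreedy X β x)
    {n : ℕ} (hn : 0 < n) (hnew : x n ∉ x '' Set.Iio n) :
    Pbeta X β (x '' Set.Iio (n + 1)) = 1 / 2 * Dbeta X β (x '' Set.Iio n) (x n) := by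
  have hne : (x '' Set.Iio n).Nonempty := ⟨x 0, 0, hn, rfl⟩
  obtain ⟨q, hq, hdist⟩ :=
    ((Set.finite_Iio n).image x).isCompact.exists_infDist_eq_dist hne (x n)
  refine Pbeta_eq_of_forall_le ⟨n, Nat.lt_succ_self n, rfl⟩
    (Set.image_mono (Set.Iio_subset_Iio n.le_succ) hq) (ne_of_mem_of_not_mem hq hnew).symm
    (by rw [Dbeta_of_nonempty hne, hdist]) ?_
  rintro _ ⟨i, hi, rfl⟩ _ ⟨j, hj, rfl⟩ hij
  have hi : i ≤ n := Nat.lt_succ_iff.mp hi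
  have hj : j ≤ n := Nat.lt_succ_iff.mp hj
  have hsep : Dbeta X β (x '' Set.Iio n) (x n) ≤ dist (x i) (x j) := by
    rcases (ne_of_apply_ne x hij).lt_or_gt with h | h
    · rw [dist_comm]; exact hgreedy.Dbeta_le_dist h hj
    · exact hgreedy.Dbeta_le_dist h hi
  have hbdry : Dbeta X β (x '' Set.Iio n) (x n) ≤ β * infDist (x i) (frontier X) :=
    (hgreedy.Dbeta_antitone hi).trans Dbeta_le_mul_infDist_frontier
  gcongr
  exact le_min hsep hbdry

lemma IsBoundaryPhobicGreedy.apply_notMem_image_Iio [Nontrivial (EuclideanSpace ℝ (Fin d))]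
    (hgreedy : IsBoundaryPhobicGreedy X β x) (hX : IsCompact X) (hint : (interior X).Nonempty)
    (hβ : 0 < β) (n : ℕ) : x n ∉ x '' Set.Iio n := by
  intro hmem
  have hfin : (x '' Set.Iio n).Finite := (Set.finite_Iio n).image x
  obtain ⟨y, hyZ, hyX⟩ := (hfin.countable.dense_compl ℝ).exists_mem_open isOpen_interior hint
  have hfr : (frontier X).Nonempty :=
    nonempty_frontier_iff.mpr ⟨hint.mono interior_subset, hX.ne_univ⟩
  have hpos : 0 < Dbeta X β (x '' Set.Iio n) y := Dbeta_pos hβ hfin.isClosed hyZ hyX hfr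
  have hmax := (hgreedy n).2 y (interior_subset hyX)
  rw [Dbeta_eq_zero_of_mem hβ.le hmem] at hmax
  exact hpos.not_ge hmax

end Greedy

theorem boundaryPhobic_packing_eq_half_spacing_general {d : ℕ}
    (X : Set (EuclideanSpace ℝ (Fin d))) (hX : IsCompact X)
    (hint : (interior X).Nonempty)
    (β : ℝ) (hβ : 0 < β)
    (x : ℕ → EuclideanSpace ℝ (Fin d))
    (hgreedy : ∀ k : ℕ, x k ∈ X ∧ ∀ y ∈ X,
      Dbeta X β (x '' Set.Iio k) y ≤ Dbeta X β (x '' Set.Iio k) (x k)) :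
    ∀ n : ℕ, 1 ≤ n →
      Pbeta X β (x '' Set.Iio (n + 1)) = (1 / 2) * Sbeta X β (x '' Set.Iio n) := by
  intro n hn
  rw [Sbeta_eq_of_forall_le (hgreedy n).1 (hgreedy n).2]
  rcases subsingleton_or_nontrivial (EuclideanSpace ℝ (Fin d)) with _ | _
  · rw [Pbeta_of_subsingleton Set.subsingleton_of_subsingleton,
      Dbeta_eq_zero_of_mem hβ.le
      (show x n ∈ x '' Set.Iio n from ⟨0, hn, Subsingleton.elim _ _⟩), mul_zero]
  exact IsBoundaryPhobicGreedy.Pbeta_eq_half_Dbeta hgreedy hn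
    (IsBoundaryPhobicGreedy.apply_notMem_image_Iio hgreedy hX hint hβ n)

/-- **Basic identity of boundary-phobic coffee-house designs.**  Let `X ⊂ ℝ^d` be compact
convex with nonempty interior, `β > 0`, and let `x k` maximize `D_β(·, X_k)` over `X`,
where `X_k = {x 0, …, x (k−1)}` (the first point maximizes `β d(·,∂X)`).
Then `P_β(X_{n+1}) = (1/2) S_β(X_n)` for all `n ≥ 1`. -/
theorem boundaryPhobic_packing_eq_half_spacing {d : ℕ}
    (X : Set (EuclideanSpace ℝ (Fin d))) (hX : IsCompact X)
    (hconv : Convex ℝ X) (hint : (interior X).Nonempty)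
    (β : ℝ) (hβ : 0 < β)
    (x : ℕ → EuclideanSpace ℝ (Fin d))
    (hgreedy : ∀ k : ℕ, x k ∈ X ∧ ∀ y ∈ X,
      Dbeta X β (x '' Set.Iio k) y ≤ Dbeta X β (x '' Set.Iio k) (x k)) :
    ∀ n : ℕ, 1 ≤ n →
      Pbeta X β (x '' Set.Iio (n + 1)) = (1 / 2) * Sbeta X β (x '' Set.Iio n) :=
  boundaryPhobic_packing_eq_half_spacing_general X hX hint β hβ x hgreedy
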